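/- arXiv:2007.00367 — 2 statements merged into one kernel-verified Lean document; each statement's English description precedes it below -/
import Mathlib

section
/- Let X be a topological space and let 𝒜 be an arrangement on X satisfying the no-coordinate-axis hypothesis. Let S be a finite set and let * denote an added element. Then for every nonempty A ∈ P_𝒜(S) and every B ∈ P_𝒜(S ⊔ {*}) with A × X ⊆ B, there exists B' ∈ P_𝒜(S) such that B = B' × X. (Equivalently, the image of P_𝒜(S) under multiplication by the bottom element 0̂ ∈ P_𝒜({*}) is an order ideal of P_𝒜(S ⊔ {*}).) -/
open scoped Classical

/-- An arrangement `𝒜` on a topological space `X`: a finite index set `I` and,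
for each `i ∈ I`, a finite set `S i` together with a closed subset `A i ⊆ X^{S i}`. -/
structure Arrangement (X : Type*) [TopologicalSpace X] where
  I : Type*
  [fintypeI : Fintype I]
  S : I → Type*
  [fintypeS : ∀ i, Fintype (S i)]
  A : ∀ i, Set (S i → X)
  closedA : ∀ i, IsClosed (A i)

/-- A generator of `𝒜` on a finite set `T`: a subset of `X^T` of the form
`{f : T → X | f ∘ j ∈ A i}` for some `i` and some injection `j : S i → T`. -/
def IsGenerator {X : Type*} [TopologicalSpace X] (𝒜 : Arrangement X) (T : Type*)
    (G : Set (T → X)) : Prop :=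
  ∃ (i : 𝒜.I) (j : 𝒜.S i → T), Function.Injective j ∧ G = {f : T → X | f ∘ j ∈ 𝒜.A i}

/-- Membership in the poset `P_𝒜(T)`: the subsets of `X^T` that are intersections of
(possibly empty) families of generators of `𝒜` on `T` (the empty intersection is all of `X^T`). -/
def InPoset {X : Type*} [TopologicalSpace X] (𝒜 : Arrangement X) (T : Type*)
    (B : Set (T → X)) : Prop :=
  ∃ 𝒢 : Set (Set (T → X)), (∀ G ∈ 𝒢, IsGenerator 𝒜 T G) ∧ B = ⋂₀ 𝒢

/-- The no-coordinate-axis hypothesis: for every `i`, every `s ∈ S i` and every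
`x̄ : S i → X` there is `y : X` such that changing the value of `x̄` at `s` to `y`
gives a function not in `A i`. -/
def NoAxis {X : Type*} [TopologicalSpace X] (𝒜 : Arrangement X) : Prop :=
  ∀ (i : 𝒜.I) (s : 𝒜.S i) (x : 𝒜.S i → X), ∃ y : X,
    (fun t => if t = s then y else x t) ∉ 𝒜.A i

/-- For `A ⊆ X^S`, the set `A × X ⊆ X^{S ⊔ {*}}`, realizing `S ⊔ {*}` as `Option S`
with `*` the element `none`. -/
def cyl {X S : Type*} (A : Set (S → X)) : Set (Option S → X) :=
  {f | (fun s => f (some s)) ∈ A}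

/-!
A generator on `S ⊔ {*}` containing `A × X` with `A` nonempty cannot involve the coordinate `*`:
points of `A × X` may take any value at `*`, so if the injection `j` hit `*` the set `A i` would
contain a whole coordinate axis, which the no-coordinate-axis hypothesis forbids. Hence every
generator above `A × X` is of the form `G' × X`, and so is every intersection of such generators.
-/

open Function

namespace NoAxis

variable {X : Type*} [TopologicalSpace X] {𝒜 : Arrangement X}

theorem exists_update_notMem (hax : NoAxis 𝒜) (i : 𝒜.I) (s : 𝒜.S i) (x : 𝒜.S i → X) :
    ∃ y, update x s y ∉ 𝒜.A i := by
  obtain ⟨y, hy⟩ := hax i s x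
  exact ⟨y, fun h => hy (funext (update_apply x s y) ▸ h)⟩

theorem ne_of_forall_update_comp_mem (hax : NoAxis 𝒜) {T : Type*} [DecidableEq T] {i : 𝒜.I}
    {j : 𝒜.S i → T} (hj : Injective j) {c : T} (f : T → X)
    (hf : ∀ y, update f c y ∘ j ∈ 𝒜.A i) (t : 𝒜.S i) : j t ≠ c := by
  rintro rfl
  obtain ⟨y, hy⟩ := hax.exists_update_notMem i t (f ∘ j)
  exact hy (update_comp_eq_of_injective f hj t y ▸ hf y)

end NoAxis

section Cylinder

variable {X S : Type*}

theorem update_none_mem_cyl {A : Set (S → X)} {f : Option S → X} (hf : f ∈ cyl A) (y : X) :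
    update f none y ∈ cyl A := by
  simpa [cyl] using hf

theorem cyl_nonempty [Nonempty X] {A : Set (S → X)} (hA : A.Nonempty) : (cyl A).Nonempty := by
  obtain ⟨a, ha⟩ := hA
  exact ⟨fun o => o.elim (Classical.arbitrary X) a, ha⟩

theorem cyl_sInter (𝒢 : Set (Set (S → X))) : cyl (⋂₀ 𝒢) = ⋂₀ (cyl '' 𝒢) := by
  ext f
  simp [cyl]

end Cylinder

section OnePoint

variable {X : Type*} [TopologicalSpace X] {𝒜 : Arrangement X} {S : Type*}

theorem exists_isGenerator_eq_cyl (hax : NoAxis 𝒜) {A : Set (S → X)} (hA : (cyl A).Nonempty)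
    {G : Set (Option S → X)} (hG : IsGenerator 𝒜 (Option S) G) (hAG : cyl A ⊆ G) :
    ∃ G', IsGenerator 𝒜 S G' ∧ G = cyl G' := by
  obtain ⟨i, j, hj, rfl⟩ := hG
  obtain ⟨f, hf⟩ := hA
  have hnone : ∀ t, j t ≠ none :=
    hax.ne_of_forall_update_comp_mem hj f fun y => hAG (update_none_mem_cyl hf y)
  choose j' hj' using fun t => Option.ne_none_iff_exists'.mp (hnone t)
  obtain rfl : j = some ∘ j' := funext hj'
  exact ⟨_, ⟨i, j', hj.of_comp, rfl⟩, rfl⟩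

theorem exists_inPoset_sInter_eq_cyl {𝒢 : Set (Set (Option S → X))}
    (h𝒢 : ∀ G ∈ 𝒢, ∃ G', IsGenerator 𝒜 S G' ∧ G = cyl G') :
    ∃ B', InPoset 𝒜 S B' ∧ ⋂₀ 𝒢 = cyl B' := by
  refine ⟨⋂₀ {G' | IsGenerator 𝒜 S G' ∧ cyl G' ∈ 𝒢}, ⟨_, fun _ hG' => hG'.1, rfl⟩, ?_⟩
  rw [cyl_sInter]
  congr 1
  ext G
  constructor
  · intro hG
    obtain ⟨G', hG', rfl⟩ := h𝒢 G hG
    exact ⟨G', ⟨hG', hG⟩, rfl⟩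
  · rintro ⟨G', ⟨-, hG'⟩, rfl⟩
    exact hG'

end OnePoint

theorem order_ideal_one_point_general {X : Type*} [TopologicalSpace X] (𝒜 : Arrangement X)
    (hax : NoAxis 𝒜) (S : Type*) :
    ∀ A : Set (S → X), InPoset 𝒜 S A → A.Nonempty →
      ∀ B : Set (Option S → X), InPoset 𝒜 (Option S) B → cyl A ⊆ B →
        ∃ B' : Set (S → X), InPoset 𝒜 S B' ∧ B = cyl B' := by
  rintro A hA hAne _ ⟨𝒢, h𝒢, rfl⟩ hAB
  cases isEmpty_or_nonempty X
  · exact ⟨A, hA, Subsingleton.elim _ _⟩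
  · exact exists_inPoset_sInter_eq_cyl fun G hG =>
      exists_isGenerator_eq_cyl hax (cyl_nonempty hAne) (h𝒢 G hG)
        (hAB.trans (Set.sInter_subset_of_mem hG))

/-- Under the no-coordinate-axis hypothesis, for every nonempty `A ∈ P_𝒜(S)` and every
`B ∈ P_𝒜(S ⊔ {*})` with `A × X ⊆ B`, there is `B' ∈ P_𝒜(S)` with `B = B' × X`. -/
theorem order_ideal_one_point {X : Type*} [TopologicalSpace X] (𝒜 : Arrangement X)
    (hax : NoAxis 𝒜) (S : Type*) [Fintype S] :
    ∀ A : Set (S → X), InPoset 𝒜 S A → A.Nonempty →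
      ∀ B : Set (Option S → X), InPoset 𝒜 (Option S) B → cyl A ⊆ B →
        ∃ B' : Set (S → X), InPoset 𝒜 S B' ∧ B = cyl B' :=
  order_ideal_one_point_general 𝒜 hax S
end

section
/- Let X be a topological space and 𝒜 an arrangement on X satisfying the no-coordinate-axis hypothesis. Let S and T be finite sets. Then for every nonempty A ∈ P_𝒜(S) and every B ∈ P_𝒜(S ⊔ T) with A × X^T ⊆ B, there exists B' ∈ P_𝒜(S) such that B = B' × X^T. (This follows by iterating the one-point case of the order-ideal claim over the elements of T.) -/
open scoped Classical

/-- For `A ⊆ X^S` and a finite set `T`, the set `A × X^T ⊆ X^{S ⊔ T}`,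
realizing the disjoint union `S ⊔ T` as the sum type `S ⊕ T`. -/
def cylSum {X S T : Type*} (A : Set (S → X)) : Set (S ⊕ T → X) :=
  {f | (fun s => f (Sum.inl s)) ∈ A}

/-!
A generator `{f | f ∘ j ∈ A i}` on `S ⊔ T` containing the cylinder `A × X^T` over a nonempty
`A` cannot involve a coordinate of `T`: if `j s ∈ T`, then moving the point of the cylinder
along that free coordinate moves `f ∘ j` along its `s`-th axis, which by the no-coordinate-axis
hypothesis eventually leaves `A i`. Hence every such generator, and so every intersection of
them, is itself a cylinder over a generator (resp. an element of `P_𝒜(S)`) on `S`.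
-/

theorem cylSum_eq_preimage {X S T : Type*} (A : Set (S → X)) :
    (cylSum A : Set (S ⊕ T → X)) = (· ∘ Sum.inl) ⁻¹' A :=
  rfl

section

variable {X : Type*} [TopologicalSpace X] {𝒜 : Arrangement X} {S T : Type*}

theorem NoAxis.exists_update_notMem_s9 (hax : NoAxis 𝒜) (i : 𝒜.I) (s : 𝒜.S i)
    (x : 𝒜.S i → X) : ∃ y, Function.update x s y ∉ 𝒜.A i := by
  obtain ⟨y, hy⟩ := hax i s x
  exact ⟨y, by rwa [← funext (Function.update_apply x s y)] at hy⟩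

theorem isLeft_of_cylSum_subset (hax : NoAxis 𝒜) {A : Set (S → X)}
    (hA₀ : (cylSum A : Set (S ⊕ T → X)).Nonempty) {i : 𝒜.I} {j : 𝒜.S i → S ⊕ T} (hj : Function.Injective j)
    (hA : cylSum A ⊆ {f | f ∘ j ∈ 𝒜.A i}) (s : 𝒜.S i) : (j s).isLeft := by
  obtain ⟨f₀, hf₀⟩ := hA₀
  rcases hjs : j s with s' | t
  · rfl
  · obtain ⟨y, hy⟩ := hax.exists_update_notMem_s9 i s (f₀ ∘ j)
    have hmem : Function.update f₀ (Sum.inr t) y ∈ cylSum A := by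
      simpa only [cylSum, Set.mem_ofPred_eq, ne_eq, reduceCtorEq, not_false_eq_true,
        Function.update_of_ne] using hf₀
    have := hA hmem
    rw [Set.mem_ofPred_eq, ← hjs, Function.update_comp_eq_of_injective _ hj] at this
    exact absurd this hy

theorem exists_isGenerator_cylSum_eq (hax : NoAxis 𝒜) {A : Set (S → X)}
    (hA₀ : (cylSum A : Set (S ⊕ T → X)).Nonempty) {G : Set (S ⊕ T → X)} (hG : IsGenerator 𝒜 (S ⊕ T) G)
    (hA : cylSum A ⊆ G) : ∃ G', IsGenerator 𝒜 S G' ∧ cylSum G' = G := by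
  obtain ⟨i, j, hj, rfl⟩ := hG
  have hleft := isLeft_of_cylSum_subset hax hA₀ hj hA
  set j' : 𝒜.S i → S := fun s => (j s).getLeft (hleft s)
  have hjj' : Sum.inl ∘ j' = j := funext fun s => Sum.inl_getLeft (j s) (hleft s)
  refine ⟨{g | g ∘ j' ∈ 𝒜.A i}, ⟨i, j', ?_, rfl⟩, ?_⟩
  · exact .of_comp (f := Sum.inl) (hjj' ▸ hj)
  · rw [← hjj']
    rfl

theorem exists_inPoset_cylSum_eq_sInter {𝒢 : Set (Set (S ⊕ T → X))}
    (h𝒢 : ∀ G ∈ 𝒢, ∃ G', IsGenerator 𝒜 S G' ∧ cylSum G' = G) :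
    ∃ B', InPoset 𝒜 S B' ∧ ⋂₀ 𝒢 = cylSum B' := by
  set 𝒢' := {G' | IsGenerator 𝒜 S G' ∧ cylSum G' ∈ 𝒢}
  have himage : cylSum '' 𝒢' = 𝒢 := by
    ext G
    constructor
    · rintro ⟨G', ⟨-, hG'⟩, rfl⟩
      exact hG'
    · intro hG
      obtain ⟨G', hgen, rfl⟩ := h𝒢 G hG
      exact ⟨G', ⟨hgen, hG⟩, rfl⟩
  refine ⟨⋂₀ 𝒢', ⟨𝒢', fun _ h => h.1, rfl⟩, ?_⟩
  rw [← himage, Set.sInter_image, cylSum_eq_preimage, Set.preimage_sInter]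
  rfl

end

theorem order_ideal_general_general {X : Type*} [TopologicalSpace X] (𝒜 : Arrangement X)
    (hax : NoAxis 𝒜) (S T : Type*) :
    ∀ A : Set (S → X), InPoset 𝒜 S A → A.Nonempty →
      ∀ B : Set (S ⊕ T → X), InPoset 𝒜 (S ⊕ T) B → cylSum A ⊆ B →
        ∃ B' : Set (S → X), InPoset 𝒜 S B' ∧ B = cylSum B' := by
  intro A _ ⟨a, ha⟩ B ⟨𝒢, hgen, hB⟩ hAB
  rcases isEmpty_or_nonempty (S ⊕ T → X) with _ | ⟨⟨x₀⟩⟩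
  · exact ⟨Set.univ, ⟨∅, by simp, by simp⟩, Subsingleton.elim _ _⟩
  have hA₀ : (cylSum A : Set (S ⊕ T → X)).Nonempty := ⟨Sum.elim a (x₀ ∘ Sum.inr), ha⟩
  subst hB
  exact exists_inPoset_cylSum_eq_sInter fun G hG =>
    exists_isGenerator_cylSum_eq hax hA₀ (hgen G hG) (hAB.trans (Set.sInter_subset_of_mem hG))

/-- Under the no-coordinate-axis hypothesis, for finite sets `S`, `T`, every nonempty
`A ∈ P_𝒜(S)` and every `B ∈ P_𝒜(S ⊔ T)` with `A × X^T ⊆ B`, there is `B' ∈ P_𝒜(S)`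
with `B = B' × X^T`. -/
theorem order_ideal_general {X : Type*} [TopologicalSpace X] (𝒜 : Arrangement X)
    (hax : NoAxis 𝒜) (S T : Type*) [Fintype S] [Fintype T] :
    ∀ A : Set (S → X), InPoset 𝒜 S A → A.Nonempty →
      ∀ B : Set (S ⊕ T → X), InPoset 𝒜 (S ⊕ T) B → cylSum A ⊆ B →
        ∃ B' : Set (S → X), InPoset 𝒜 S B' ∧ B = cylSum B' :=
  order_ideal_general_general 𝒜 hax S T
end
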